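/- arXiv:1906.04584 — 2 statements merged into one kernel-verified Lean document; each statement's English description precedes it below -/
import Mathlib

section
/- Let f : ℝⁿ → [0,1] be a measurable function and define its Weierstrass transform f̂(x) = (2π)^{-n/2} ∫_{ℝⁿ} f(t) exp(-‖x-t‖²/2) dt, i.e. f̂(x) = E_{X ~ N(0, Iₙ)}[f(x + X)]. Then f̂ is √(2/π)-Lipschitz with respect to the Euclidean norm: for all x, y ∈ ℝⁿ, |f̂(x) - f̂(y)| ≤ √(2/π) · ‖x - y‖₂. -/
/-!
Writing `f̂(x) = ∫ f(t) φ(t - x) dt` with `φ` the Gaussian density and using `0 ≤ f ≤ 1`,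
`|f̂(x) - f̂(y)|` is at most the `L¹` distance between `φ` and its translate by `v = x - y`.
The density is rotation invariant, so `v` may be taken along a coordinate axis; it is also a
product of one-dimensional densities, so that distance is the one between two one-dimensional
standard Gaussians with means `0` and `‖v‖`, which is at most `√(2/π) ‖v‖`.
-/

open MeasureTheory Real

noncomputable def stdGaussian (n : ℕ) : Measure (EuclideanSpace ℝ (Fin n)) :=
  volume.withDensity fun t =>
    ENNReal.ofReal ((2 * π) ^ (-(n : ℝ) / 2) * Real.exp (-‖t‖ ^ 2 / 2))

section

open Set ProbabilityTheory

lemma abs_integral_mul_sub_integral_mul_le {α : Type*} [MeasurableSpace α] {μ : Measure α}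
    {p q f : α → ℝ} (hp : Integrable p μ) (hq : Integrable q μ) (hf : AEStronglyMeasurable f μ)
    (hf₁ : ∀ x, |f x| ≤ 1) :
    |∫ x, p x * f x ∂μ - ∫ x, q x * f x ∂μ| ≤ ∫ x, |p x - q x| ∂μ := by
  have hbdd : ∀ᵐ x ∂μ, ‖f x‖ ≤ 1 := ae_of_all _ hf₁
  rw [← integral_sub (hp.mul_bdd hf hbdd) (hq.mul_bdd hf hbdd)]
  simp_rw [← sub_mul]
  refine abs_integral_le_integral_abs.trans (integral_mono ((hp.sub hq).mul_bdd hf hbdd).abs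
    (hp.sub hq).abs fun x => ?_)
  rw [abs_mul]
  exact mul_le_of_le_one_right (abs_nonneg _) (hf₁ x)

lemma setIntegral_Ioi_comp_sub_right {E : Type*} [NormedAddCommGroup E] [NormedSpace ℝ E]
    (f : ℝ → E) (a c : ℝ) :
    ∫ x in Ioi a, f (x - c) = ∫ x in Ioi (a - c), f x := by
  have h := (measurePreserving_sub_right volume c).setIntegral_preimage_emb
    (measurableEmbedding_subRight c) f (Ioi (a - c))
  rwa [preimage_sub_const_Ioi, sub_add_cancel] at h

lemma gaussianPDFReal_le_of_sq_le {m m' : ℝ} {v : NNReal} {x x' : ℝ}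
    (h : (x' - m') ^ 2 ≤ (x - m) ^ 2) : gaussianPDFReal m v x ≤ gaussianPDFReal m' v x' := by
  unfold gaussianPDFReal
  gcongr

lemma gaussianPDFReal_le_inv_sqrt (x : ℝ) : gaussianPDFReal 0 1 x ≤ (√(2 * π))⁻¹ := by
  have hexp : rexp (-x ^ 2 / 2) ≤ 1 := exp_le_one_iff.2 (by nlinarith [sq_nonneg x])
  simpa [gaussianPDFReal] using mul_le_of_le_one_right (by positivity) hexp

/- As both densities have mass one, the `L¹` distance is twice the integral of the positive part
of their difference, which lives on `(μ / 2, ∞)`; after translation this is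
`2 P(|Z| < μ / 2) ≤ 2 μ / √(2π)`. -/
lemma integral_abs_gaussianPDFReal_sub_le {μ : ℝ} (hμ : 0 ≤ μ) :
    ∫ s, |gaussianPDFReal μ 1 s - gaussianPDFReal 0 1 s| ≤ √(2 / π) * μ := by
  have hint : Integrable (fun s => gaussianPDFReal μ 1 s - gaussianPDFReal 0 1 s) :=
    (integrable_gaussianPDFReal _ _).sub (integrable_gaussianPDFReal _ _)
  have hpos : (fun s => max (gaussianPDFReal μ 1 s - gaussianPDFReal 0 1 s) 0) =
      (Ioi (μ / 2)).indicator fun s => gaussianPDFReal μ 1 s - gaussianPDFReal 0 1 s := by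
    ext s
    by_cases hs : s ∈ Ioi (μ / 2)
    · rw [indicator_of_mem hs, max_eq_left (sub_nonneg.2 (gaussianPDFReal_le_of_sq_le _))]
      nlinarith [mem_Ioi.1 hs]
    · rw [indicator_of_notMem hs, max_eq_right (sub_nonpos.2 (gaussianPDFReal_le_of_sq_le _))]
      nlinarith [not_lt.1 (mt mem_Ioi.2 hs)]
  have hpart : ∫ s, |gaussianPDFReal μ 1 s - gaussianPDFReal 0 1 s| =
      2 * ∫ s in Ioi (μ / 2), (gaussianPDFReal μ 1 s - gaussianPDFReal 0 1 s) := by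
    have habs (x : ℝ) : |x| = 2 * max x 0 - x := by
      rcases le_total 0 x with h | h
      · rw [abs_of_nonneg h, max_eq_left h]; ring
      · rw [abs_of_nonpos h, max_eq_right h]; ring
    simp_rw [habs]
    rw [integral_sub (hint.pos_part.const_mul 2) hint, integral_const_mul, hpos,
      integral_indicator measurableSet_Ioi, integral_sub (integrable_gaussianPDFReal _ _)
      (integrable_gaussianPDFReal _ _), integral_gaussianPDFReal_eq_one _ one_ne_zero,
      integral_gaussianPDFReal_eq_one _ one_ne_zero, sub_self, sub_zero]
  have hmid : ∫ s in Ioi (μ / 2), (gaussianPDFReal μ 1 s - gaussianPDFReal 0 1 s) =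
      ∫ s in -(μ / 2)..μ / 2, gaussianPDFReal 0 1 s := by
    have hshift : gaussianPDFReal μ 1 = fun s => gaussianPDFReal 0 1 (s - μ) := by
      ext s; rw [gaussianPDFReal_sub, zero_add]
    rw [integral_sub (integrable_gaussianPDFReal _ _).integrableOn
      (integrable_gaussianPDFReal _ _).integrableOn, hshift, setIntegral_Ioi_comp_sub_right,
      ← intervalIntegral.integral_Ioi_sub_Ioi (integrable_gaussianPDFReal _ _).integrableOn
      (by linarith)]
    ring_nf
  have hbound : ∫ s in -(μ / 2)..μ / 2, gaussianPDFReal 0 1 s ≤ μ * (√(2 * π))⁻¹ := by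
    have := intervalIntegral.norm_integral_le_of_norm_le_const (a := -(μ / 2)) (b := μ / 2)
      (C := (√(2 * π))⁻¹) fun s _ => by
        rw [norm_of_nonneg (gaussianPDFReal_nonneg _ _ _)]
        exact gaussianPDFReal_le_inv_sqrt s
    rw [abs_of_nonneg (by linarith)] at this
    linarith [le_norm_self (∫ s in -(μ / 2)..μ / 2, gaussianPDFReal 0 1 s)]
  have hconst : 2 * (√(2 * π))⁻¹ = √(2 / π) := by
    rw [show 2 / π = 2 ^ 2 / (2 * π) by field_simp, sqrt_div' _ (by positivity),
      sqrt_sq zero_le_two, div_eq_mul_inv]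
  calc _ = 2 * ∫ s in -(μ / 2)..μ / 2, gaussianPDFReal 0 1 s := by rw [hpart, hmid]
    _ ≤ 2 * (μ * (√(2 * π))⁻¹) := by gcongr
    _ = √(2 / π) * μ := by rw [← hconst]; ring

noncomputable def stdGaussianPDF (ι : Type*) [Fintype ι] (t : EuclideanSpace ℝ ι) : ℝ :=
  (2 * π) ^ (-(Fintype.card ι : ℝ) / 2) * rexp (-‖t‖ ^ 2 / 2)

variable {ι : Type*} [Fintype ι]

lemma stdGaussianPDF_eq_prod (t : EuclideanSpace ℝ ι) :
    stdGaussianPDF ι t = ∏ i, gaussianPDFReal 0 1 (t i) := by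
  have hc : (2 * π) ^ (-(Fintype.card ι : ℝ) / 2) = ∏ _i : ι, (√(2 * π))⁻¹ := by
    rw [Finset.prod_const, Finset.card_univ, sqrt_eq_rpow, ← rpow_neg (by positivity),
      ← rpow_natCast, ← rpow_mul (by positivity)]
    ring_nf
  simp only [stdGaussianPDF, gaussianPDFReal, hc, EuclideanSpace.real_norm_sq_eq,
    Finset.sum_div, ← Finset.sum_neg_distrib, exp_sum, Finset.prod_mul_distrib]
  norm_num [neg_div]

lemma stdGaussianPDF_nonneg (t : EuclideanSpace ℝ ι) : 0 ≤ stdGaussianPDF ι t := by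
  unfold stdGaussianPDF; positivity

lemma continuous_stdGaussianPDF : Continuous (stdGaussianPDF ι) := by
  unfold stdGaussianPDF; fun_prop

lemma stdGaussianPDF_linearIsometryEquiv (L : EuclideanSpace ℝ ι ≃ₗᵢ[ℝ] EuclideanSpace ℝ ι)
    (t : EuclideanSpace ℝ ι) : stdGaussianPDF ι (L t) = stdGaussianPDF ι t := by
  simp only [stdGaussianPDF, L.norm_map]

lemma integrable_stdGaussianPDF : Integrable (stdGaussianPDF ι) := by
  rw [← (PiLp.volume_preserving_toLp ι).integrable_comp_emb
    (MeasurableEquiv.toLp 2 _).measurableEmbedding]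
  simp only [Function.comp_def, stdGaussianPDF_eq_prod]
  exact Integrable.fintype_prod (f := fun _ => gaussianPDFReal 0 1)
    fun _ => integrable_gaussianPDFReal 0 1

lemma integral_abs_stdGaussianPDF_sub_single [DecidableEq ι] (i : ι) (d : ℝ) :
    ∫ t, |stdGaussianPDF ι (t - EuclideanSpace.single i d) - stdGaussianPDF ι t| =
      ∫ s, |gaussianPDFReal d 1 s - gaussianPDFReal 0 1 s| := by
  let g : ι → ℝ → ℝ := Function.update (fun _ => gaussianPDFReal 0 1) i
    fun s => |gaussianPDFReal d 1 s - gaussianPDFReal 0 1 s|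
  have hprod (a : ι → ℝ) :
      |stdGaussianPDF ι (WithLp.toLp 2 a - EuclideanSpace.single i d) -
        stdGaussianPDF ι (WithLp.toLp 2 a)| = ∏ j, g j (a j) := by
    have hrest : ∀ j ∈ ({i}ᶜ : Finset ι),
        gaussianPDFReal 0 1 (a j - EuclideanSpace.single i d j) = gaussianPDFReal 0 1 (a j) :=
      fun j hj => by simp_all
    have hg : ∀ j ∈ ({i}ᶜ : Finset ι), g j (a j) = gaussianPDFReal 0 1 (a j) :=
      fun j hj => by simp_all [g]
    simp only [stdGaussianPDF_eq_prod, PiLp.sub_apply]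
    rw [Fintype.prod_eq_mul_prod_compl i, Fintype.prod_eq_mul_prod_compl i,
      Fintype.prod_eq_mul_prod_compl i, Finset.prod_congr rfl hrest, Finset.prod_congr rfl hg,
      ← sub_mul, abs_mul,
      abs_of_nonneg (Finset.prod_nonneg fun j _ => gaussianPDFReal_nonneg _ _ _)]
    simp [g, gaussianPDFReal_sub]
  rw [← (PiLp.volume_preserving_toLp ι).integral_comp
    (MeasurableEquiv.toLp 2 _).measurableEmbedding]
  simp only [hprod]
  rw [integral_fintype_prod_volume_eq_prod, Finset.prod_eq_single i]
  · simp [g]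
  · intro j _ hj
    simpa [g, hj] using integral_gaussianPDFReal_eq_one 0 one_ne_zero
  · simp

lemma integral_abs_stdGaussianPDF_sub_linearIsometryEquiv
    (L : EuclideanSpace ℝ ι ≃ₗᵢ[ℝ] EuclideanSpace ℝ ι) (v : EuclideanSpace ℝ ι) :
    ∫ t, |stdGaussianPDF ι (t - L v) - stdGaussianPDF ι t| =
      ∫ t, |stdGaussianPDF ι (t - v) - stdGaussianPDF ι t| := by
  rw [← L.measurePreserving.integral_comp L.toHomeomorph.measurableEmbedding]
  simp only [← map_sub, stdGaussianPDF_linearIsometryEquiv]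

lemma exists_orthonormalBasis_apply_eq {E : Type*} [NormedAddCommGroup E] [InnerProductSpace ℝ E]
    [FiniteDimensional ℝ E] (h : Module.finrank ℝ E = Fintype.card ι) (i : ι) {u : E}
    (hu : ‖u‖ = 1) : ∃ b : OrthonormalBasis ι ℝ E, b i = u := by
  have hon : Orthonormal ℝ (({i} : Set ι).domRestrict fun _ => u) := by
    rw [orthonormal_subsingleton_iff]
    exact fun _ => hu
  obtain ⟨b, hb⟩ := hon.exists_orthonormalBasis_extension_of_card_eq h
  exact ⟨b, hb i rfl⟩

lemma integral_abs_stdGaussianPDF_sub_le (v : EuclideanSpace ℝ ι) :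
    ∫ t, |stdGaussianPDF ι (t - v) - stdGaussianPDF ι t| ≤ √(2 / π) * ‖v‖ := by
  classical
  obtain rfl | hv := eq_or_ne v 0
  · simp
  obtain ⟨i, -⟩ : ∃ i, v i ≠ 0 := by
    by_contra! h
    exact hv (PiLp.ext h)
  have hv₀ : ‖v‖ ≠ 0 := norm_ne_zero_iff.2 hv
  obtain ⟨b, hb⟩ := exists_orthonormalBasis_apply_eq (by simp) i (u := ‖v‖⁻¹ • v)
    (by rw [norm_smul, norm_inv, norm_norm, inv_mul_cancel₀ hv₀])
  have hrepr : b.repr v = EuclideanSpace.single i ‖v‖ := by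
    conv_lhs => rw [← smul_inv_smul₀ hv₀ v, ← hb, map_smul, b.repr_self]
    ext j
    simp
  rw [← integral_abs_stdGaussianPDF_sub_linearIsometryEquiv b.repr, hrepr,
    integral_abs_stdGaussianPDF_sub_single]
  exact integral_abs_gaussianPDFReal_sub_le (norm_nonneg v)

end

lemma integral_comp_add_stdGaussian {n : ℕ} (f : EuclideanSpace ℝ (Fin n) → ℝ)
    (x : EuclideanSpace ℝ (Fin n)) :
    ∫ t, f (x + t) ∂stdGaussian n = ∫ t, stdGaussianPDF (Fin n) (t - x) * f t := by
  have hdens : stdGaussian n =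
      volume.withDensity fun t => ENNReal.ofReal (stdGaussianPDF (Fin n) t) := by
    simp only [stdGaussian, stdGaussianPDF, Fintype.card_fin]
  rw [hdens, integral_withDensity_eq_integral_toReal_smul
    continuous_stdGaussianPDF.measurable.ennreal_ofReal
    (ae_of_all _ fun _ => ENNReal.ofReal_lt_top)]
  conv_rhs => rw [← integral_add_left_eq_self _ x]
  simp [ENNReal.toReal_ofReal (stdGaussianPDF_nonneg _)]

/-- if `f : ℝⁿ → [0,1]` is measurable, its Weierstrass transform
`f̂(x) = E_{X ~ N(0,Iₙ)}[f(x + X)]` is `√(2/π)`-Lipschitz for the Euclidean norm. -/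
theorem weierstrass_transform_lipschitz (n : ℕ)
    (f : EuclideanSpace ℝ (Fin n) → ℝ) (hf : Measurable f)
    (hf01 : ∀ t, f t ∈ Set.Icc (0 : ℝ) 1)
    (fhat : EuclideanSpace ℝ (Fin n) → ℝ)
    (hfhat : ∀ x, fhat x = ∫ t, f (x + t) ∂(stdGaussian n)) :
    ∀ x y : EuclideanSpace ℝ (Fin n),
      |fhat x - fhat y| ≤ Real.sqrt (2 / π) * ‖x - y‖ := by
  intro x y
  have hdens (z : EuclideanSpace ℝ (Fin n)) : Integrable fun t => stdGaussianPDF (Fin n) (t - z) :=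
    integrable_stdGaussianPDF.comp_sub_right z
  have hf₁ (t : EuclideanSpace ℝ (Fin n)) : |f t| ≤ 1 :=
    abs_le.2 ⟨by linarith [(hf01 t).1], (hf01 t).2⟩
  rw [hfhat, hfhat, integral_comp_add_stdGaussian, integral_comp_add_stdGaussian]
  calc _ ≤ ∫ t, |stdGaussianPDF (Fin n) (t - x) - stdGaussianPDF (Fin n) (t - y)| :=
        abs_integral_mul_sub_integral_mul_le (hdens x) (hdens y) hf.aestronglyMeasurable hf₁
    _ = ∫ t, |stdGaussianPDF (Fin n) (t - (x - y)) - stdGaussianPDF (Fin n) t| := by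
        rw [← integral_add_left_eq_self _ y]
        congr 1 with t
        rw [add_sub_cancel_left, show y + t - x = t - (x - y) by abel]
    _ ≤ _ := integral_abs_stdGaussianPDF_sub_le _
end

section
/- Let f : ℝⁿ → [0,1] be measurable and f̂ its Weierstrass transform. For every x ∈ ℝⁿ and every unit vector u ∈ ℝⁿ, the directional derivative satisfies u · ∇f̂(x) ≤ √(2/π). -/
/-!
Along a unit vector `u`, the coordinate `⟪u, X⟫` of `X ~ N(0, Iₙ)` is a standard real Gaussian,
so, as `0 ≤ f ≤ 1`, `⟪u, ∇f̂(x)⟫ = E[f(x + X) ⟪u, X⟫] ≤ E|⟪u, X⟫| = √(2/π)`.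
The explicit density `(2π)^{-n/2} e^{-‖t‖²/2}` is matched with `ProbabilityTheory.stdGaussian`
by comparing characteristic functions.
-/

open MeasureTheory Real

lemma integral_Ioi_mul_exp_neg_sq_div_two : ∫ s in Set.Ioi (0 : ℝ), s * exp (-s ^ 2 / 2) = 1 := by
  have := integral_rpow_mul_exp_neg_mul_rpow (p := 2) (q := 1) (b := 1 / 2)
    two_pos (by norm_num) (by norm_num)
  norm_num [rpow_two, Gamma_one] at this
  convert this using 5
  ring

lemma integral_abs_mul_exp_neg_sq_div_two : ∫ s : ℝ, |s| * exp (-s ^ 2 / 2) = 2 := by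
  have := integral_comp_abs (f := fun s : ℝ => s * exp (-s ^ 2 / 2))
  simp only [sq_abs, integral_Ioi_mul_exp_neg_sq_div_two, mul_one] at this
  exact this

lemma integral_abs_gaussianReal : ∫ s, |s| ∂ProbabilityTheory.gaussianReal 0 1 = √(2 / π) := by
  rw [ProbabilityTheory.integral_gaussianReal_eq_integral_smul one_ne_zero,
    ProbabilityTheory.gaussianPDFReal_def]
  simp only [smul_eq_mul, NNReal.coe_one, mul_one, sub_zero]
  simp_rw [mul_assoc, integral_const_mul, mul_comm (exp _), integral_abs_mul_exp_neg_sq_div_two]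
  rw [sqrt_div zero_le_two, sqrt_mul zero_le_two]
  have : 0 < √π := sqrt_pos.2 pi_pos
  have : √2 * √2 = 2 := mul_self_sqrt zero_le_two
  field_simp
  linarith

lemma inner_integral_smul_le_integral_abs_inner {E : Type*} [NormedAddCommGroup E]
    [InnerProductSpace ℝ E] [CompleteSpace E] [MeasurableSpace E] {μ : Measure E}
    {g : E → ℝ} (hg : ∀ t, g t ∈ Set.Icc (0 : ℝ) 1) {u : E}
    (hu : Integrable (fun t => inner ℝ u t) μ) :
    inner ℝ u (∫ t, g t • t ∂μ) ≤ ∫ t, |inner ℝ u t| ∂μ := by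
  by_cases hgint : Integrable (fun t => g t • t) μ
  · rw [← integral_inner hgint]
    refine integral_mono (hgint.const_inner u) hu.abs fun t => ?_
    calc inner ℝ u (g t • t) = g t * inner ℝ u t := real_inner_smul_right _ _ _
      _ ≤ |g t * inner ℝ u t| := le_abs_self _
      _ = g t * |inner ℝ u t| := by rw [abs_mul, abs_of_nonneg (hg t).1]
      _ ≤ |inner ℝ u t| := mul_le_of_le_one_left (abs_nonneg _) (hg t).2
  · rw [integral_undef hgint, inner_zero_right]
    exact integral_nonneg fun t => abs_nonneg _

section
variable {V : Type*} [NormedAddCommGroup V] [InnerProductSpace ℝ V] [FiniteDimensional ℝ V]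
  [MeasurableSpace V] [BorelSpace V]

lemma map_inner_stdGaussian {u : V} (hu : ‖u‖ = 1) :
    (ProbabilityTheory.stdGaussian V).map (fun t => inner ℝ u t) =
      ProbabilityTheory.gaussianReal 0 1 := by
  have := ProbabilityTheory.IsGaussian.map_eq_gaussianReal
    (μ := ProbabilityTheory.stdGaussian V) (innerSL ℝ u)
  rw [ProbabilityTheory.integral_strongDual_stdGaussian,
    ProbabilityTheory.variance_dual_stdGaussian, innerSL_apply_norm, hu] at this
  simpa using this

lemma integrable_exp_neg_sq_norm_div_two : Integrable fun t : V => exp (-‖t‖ ^ 2 / 2) := by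
  refine Integrable.of_integral_ne_zero ?_
  have := GaussianFourier.integral_rexp_neg_mul_sq_norm (V := V) (b := 1 / 2) one_half_pos
  simp_rw [neg_div, div_eq_inv_mul (‖_‖ ^ 2), ← neg_mul, one_div] at this ⊢
  rw [this]
  positivity

lemma withDensity_gaussian_eq_stdGaussian :
    volume.withDensity (fun t : V => ENNReal.ofReal
      ((2 * π) ^ (-(Module.finrank ℝ V : ℝ) / 2) * exp (-‖t‖ ^ 2 / 2))) =
      ProbabilityTheory.stdGaussian V := by
  set d : ℝ := (Module.finrank ℝ V : ℝ) with hd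
  have := isFiniteMeasure_withDensity_ofReal
    ((integrable_exp_neg_sq_norm_div_two (V := V)).const_mul ((2 * π) ^ (-d / 2))).2
  refine Measure.ext_of_charFun (funext fun t => ?_)
  rw [ProbabilityTheory.charFun_stdGaussian, charFun_apply,
    integral_withDensity_eq_integral_toReal_smul (by fun_prop) (by simp)]
  have hfourier := GaussianFourier.integral_cexp_neg_mul_sq_norm_add (V := V) (b := 1 / 2)
    (by norm_num) Complex.I t
  calc ∫ x, (ENNReal.ofReal ((2 * π) ^ (-d / 2) * exp (-‖x‖ ^ 2 / 2))).toReal •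
        Complex.exp (inner ℝ x t * Complex.I)
      = ∫ x, ((2 * π) ^ (-d / 2) : ℝ) *
          Complex.exp (-(1 / 2) * ‖x‖ ^ 2 + Complex.I * inner ℝ t x) := by
        congr 1 with x
        rw [ENNReal.toReal_ofReal (by positivity), real_inner_comm, Complex.real_smul,
          Complex.ofReal_mul, mul_assoc, Complex.ofReal_exp, ← Complex.exp_add]
        push_cast
        ring_nf
    _ = Complex.exp (-‖t‖ ^ 2 / 2) := by
        have hpow : ((π : ℂ) / (1 / 2)) ^ ((Module.finrank ℝ V : ℂ) / 2) =
            ((2 * π) ^ (d / 2) : ℝ) := by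
          rw [Complex.ofReal_cpow (by positivity), hd]
          push_cast
          ring_nf
        have hcancel : (2 * π) ^ (-d / 2) * (2 * π) ^ (d / 2) = 1 := by
          rw [neg_div, rpow_neg (by positivity), inv_mul_cancel₀ (by positivity)]
        rw [integral_const_mul, hfourier, hpow, ← mul_assoc, ← Complex.ofReal_mul, hcancel,
          Complex.ofReal_one, one_mul, Complex.I_sq]
        ring_nf

end

lemma stdGaussian_eq_probabilityTheory_stdGaussian (n : ℕ) :
    stdGaussian n = ProbabilityTheory.stdGaussian (EuclideanSpace ℝ (Fin n)) := by
  simpa [stdGaussian] using withDensity_gaussian_eq_stdGaussian (V := EuclideanSpace ℝ (Fin n))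

theorem weierstrass_directional_deriv_le_general (n : ℕ)
    (f : EuclideanSpace ℝ (Fin n) → ℝ)
    (hf01 : ∀ t, f t ∈ Set.Icc (0 : ℝ) 1)
    (x u : EuclideanSpace ℝ (Fin n)) (hu : ‖u‖ = 1) :
    (inner ℝ u (∫ t, f (x + t) • t ∂(stdGaussian n)) : ℝ) ≤ Real.sqrt (2 / π) := by
  set μ := ProbabilityTheory.stdGaussian (EuclideanSpace ℝ (Fin n))
  have hint : Integrable (fun t => inner ℝ u t) μ :=
    ProbabilityTheory.IsGaussian.integrable_dual μ (innerSL ℝ u)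
  rw [stdGaussian_eq_probabilityTheory_stdGaussian]
  calc inner ℝ u (∫ t, f (x + t) • t ∂μ)
      ≤ ∫ t, |inner ℝ u t| ∂μ := inner_integral_smul_le_integral_abs_inner (fun t => hf01 _) hint
    _ = ∫ s, |s| ∂μ.map (fun t => inner ℝ u t) :=
        (integral_map hint.aemeasurable (by fun_prop)).symm
    _ = √(2 / π) := by rw [map_inner_stdGaussian hu, integral_abs_gaussianReal]

/-- for measurable `f : ℝⁿ → [0,1]` with Weierstrass transform `f̂`,
whose gradient is `∇f̂(x) = E_{X ~ N(0,Iₙ)}[f(x + X) • X]`, every directional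
derivative along a unit vector `u` satisfies `u ⬝ ∇f̂(x) ≤ √(2/π)`. -/
theorem weierstrass_directional_deriv_le (n : ℕ)
    (f : EuclideanSpace ℝ (Fin n) → ℝ) (hf : Measurable f)
    (hf01 : ∀ t, f t ∈ Set.Icc (0 : ℝ) 1)
    (x u : EuclideanSpace ℝ (Fin n)) (hu : ‖u‖ = 1) :
    (inner ℝ u (∫ t, f (x + t) • t ∂(stdGaussian n)) : ℝ) ≤ Real.sqrt (2 / π) :=
  weierstrass_directional_deriv_le_general n f hf01 x u hu
end
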